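/- Let B be a symmetric positive definite N×N real matrix, μ, μ̂ ∈ ℝ^N, b_1, …, b_N ∈ ℝ^N nonzero vectors with |b_iᵀμ| ≤ 1 for all i, 0 < l ≤ v reals, and T ≥ 5, N ≥ 1 integers. Let a* be an index maximizing i ↦ b_iᵀμ, define Δ_i := b_{a*}ᵀμ − b_iᵀμ, g := v√(4 ln(TN)) + l, and p := 1/(4e√π). Assume that for all i ∈ {1,…,N}: |b_iᵀμ̂ − b_iᵀμ| ≤ l ‖b_i‖_{B^{−1}}. Let ξ be a random vector in ℝ^N whose law is the N-fold product of gaussianReal 0 1, set μ̃ := μ̂ + v B^{−1/2} ξ, and let a : ℝ^N → {1,…,N} be any measurable function satisfying b_{a(x)}ᵀx = max_i b_iᵀx for all x ∈ ℝ^N. Then E[ Δ_{a(μ̃)} ] ≤ (11g/p) · E[ ‖b_{a(μ̃)}‖_{B^{−1}} ] + 1/T². -/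

import Mathlib

/-!
Write `μ̃ = μ̂ + v B^{-1/2} ξ`. With `c_i = B^{-1/2} b_i` we have `b_iᵀμ̃ = b_iᵀμ̂ + v c_iᵀξ`,
`‖c_i‖ = s_i := ‖b_i‖_{B⁻¹}`, and `c_iᵀξ / s_i` is standard normal. On the event `G` that
`|c_iᵀξ| ≤ t s_i` for every arm, `t = √(4 ln TN)`, each sampled reward is within `g s_i` of the
true one; by Mills' inequality and a union bound, `P(Gᶜ) ≤ 1/(3T²)`.

Call arm `i` unsaturated when `Δ_i ≤ g s_i`, and let `j` be an unsaturated arm of least width.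
On `G` the played arm `a` satisfies `Δ_a ≤ 2 g s_j + g s_a`. If moreover the sample of `a*` is
optimistic, which happens with probability at least `P(Z > 1) ≥ p`, then `a` is itself
unsaturated, so `s_a ≥ s_j`. Hence `s_j (p - P(Gᶜ)) ≤ E[s_a]` and
`E[Δ_a] ≤ g (1 + 2 / (p - 1/(3T²))) E[s_a] + 2 P(Gᶜ)`.
-/

set_option autoImplicit false

open MeasureTheory ProbabilityTheory Matrix

open scoped ComplexOrder in
/-- The square root of a positive semidefinite matrix, with its definition from the older
Mathlib (removed since). -/
noncomputable def Matrix.PosSemidef.sqrt {n 𝕜 : Type*} [Fintype n] [DecidableEq n] [RCLike 𝕜]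
    {A : Matrix n n 𝕜} (hA : A.PosSemidef) : Matrix n n 𝕜 :=
  (hA.isHermitian.eigenvectorUnitary : Matrix n n 𝕜) *
    diagonal ((↑) ∘ (fun x : ℝ => Real.sqrt x) ∘ hA.isHermitian.eigenvalues) *
    (star hA.isHermitian.eigenvectorUnitary : Matrix n n 𝕜)

open Set Real

namespace Matrix.PosSemidef

variable {n : Type*} [Fintype n] [DecidableEq n]

section RCLike

variable {𝕜 : Type*} [RCLike 𝕜] {A : Matrix n n 𝕜}

open scoped ComplexOrder

lemma isHermitian_sqrt (hA : A.PosSemidef) : hA.sqrt.IsHermitian := by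
  refine isHermitian_mul_mul_conjTranspose _ (isHermitian_diagonal_of_self_adjoint _ ?_)
  ext i; simp

lemma sqrt_mul_self (hA : A.PosSemidef) : hA.sqrt * hA.sqrt = A := by
  let C : Matrix n n 𝕜 := hA.1.eigenvectorUnitary
  let E := diagonal ((↑) ∘ Real.sqrt ∘ hA.1.eigenvalues : n → 𝕜)
  suffices C * (E * (star C * C) * E) * star C = A by
    change (C * E * star C) * (C * E * star C) = A
    simpa only [← mul_assoc] using this
  have : star C * C = 1 := by simp [C]
  rw [this, mul_one]
  have : E * E = diagonal ((↑) ∘ hA.1.eigenvalues) := by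
    rw [diagonal_mul_diagonal]
    congr! with v
    simp [← pow_two, ← RCLike.ofReal_pow, Real.sq_sqrt (hA.eigenvalues_nonneg v)]
  rw [this]
  conv_rhs => rw [hA.1.spectral_theorem]
  rfl

end RCLike

variable {A : Matrix n n ℝ}

lemma dotProduct_inv_sqrt_mulVec (hA : A.PosSemidef) (x y : n → ℝ) :
    x ⬝ᵥ hA.sqrt⁻¹ *ᵥ y = hA.sqrt⁻¹ *ᵥ x ⬝ᵥ y := by
  rw [dotProduct_mulVec, ← vecMul_transpose, transpose_nonsing_inv,
    ← conjTranspose_eq_transpose_of_trivial, hA.isHermitian_sqrt.eq]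

lemma dotProduct_inv_mulVec_self (hA : A.PosSemidef) (x : n → ℝ) :
    x ⬝ᵥ A⁻¹ *ᵥ x = hA.sqrt⁻¹ *ᵥ x ⬝ᵥ hA.sqrt⁻¹ *ᵥ x := by
  conv_lhs => rw [← hA.sqrt_mul_self, mul_inv_rev, ← mulVec_mulVec, dotProduct_inv_sqrt_mulVec]

end Matrix.PosSemidef

lemma dotProduct_self_pos {κ : Type*} [Fintype κ] {c : κ → ℝ} (hc : c ≠ 0) : 0 < c ⬝ᵥ c := by
  simpa using dotProduct_star_self_pos_iff.2 hc

namespace ProbabilityTheory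

lemma measureReal_gaussianReal_eq_integral (s : Set ℝ) :
    (gaussianReal 0 1).real s = ∫ x in s, gaussianPDFReal 0 1 x := by
  rw [measureReal_def, gaussianReal_apply_eq_integral _ one_ne_zero,
    ENNReal.toReal_ofReal (integral_nonneg (gaussianPDFReal_nonneg 0 1))]

lemma gaussianPDFReal_zero_one :
    gaussianPDFReal 0 1 = fun x => (√(2 * π))⁻¹ * rexp (-x ^ 2 / 2) := by
  ext x; simp [gaussianPDFReal]

lemma hasDerivAt_gaussianPDFReal_zero_one (x : ℝ) :
    HasDerivAt (gaussianPDFReal 0 1) (-x * gaussianPDFReal 0 1 x) x := by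
  have h : HasDerivAt (fun y : ℝ => -y ^ 2 / 2) (-x) x :=
    ((((hasDerivAt_id x).fun_pow 2).fun_neg).div_const 2).congr_deriv (by simp; ring)
  rw [gaussianPDFReal_zero_one]
  exact (h.exp.const_mul _).congr_deriv (by ring)

lemma tendsto_gaussianPDFReal_zero_one_atTop :
    Filter.Tendsto (gaussianPDFReal 0 1) Filter.atTop (nhds 0) := by
  rw [gaussianPDFReal_zero_one]
  have : Filter.Tendsto (fun x : ℝ => -x ^ 2 / 2) Filter.atTop Filter.atBot := by
    simp_rw [neg_div]
    exact Filter.tendsto_neg_atTop_atBot.comp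
      ((Filter.tendsto_pow_atTop two_ne_zero).atTop_div_const two_pos)
  simpa using (tendsto_exp_atBot.comp this).const_mul (√(2 * π))⁻¹

lemma measureReal_gaussianReal_Ioi_le {t : ℝ} (ht : 0 < t) :
    (gaussianReal 0 1).real (Ioi t) ≤ gaussianPDFReal 0 1 t / t := by
  have hint : IntegrableOn (fun x => x / t * gaussianPDFReal 0 1 x) (Ioi t) := by
    refine (((integrable_mul_exp_neg_mul_sq (b := 1 / 2) (by norm_num)).const_mul
      ((√(2 * π))⁻¹ / t)).congr (ae_of_all _ fun x => ?_)).integrableOn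
    simp only [gaussianPDFReal_zero_one]
    ring_nf
  have hderiv : ∀ x ∈ Ioi t, HasDerivAt (fun y => -gaussianPDFReal 0 1 y / t)
      (x / t * gaussianPDFReal 0 1 x) x := fun x _ =>
    ((hasDerivAt_gaussianPDFReal_zero_one x).neg.div_const t).congr_deriv (by ring)
  have hlim : Filter.Tendsto (fun y => -gaussianPDFReal 0 1 y / t) Filter.atTop (nhds 0) := by
    simpa using tendsto_gaussianPDFReal_zero_one_atTop.neg.div_const t
  have hcont : ContinuousWithinAt (fun y => -gaussianPDFReal 0 1 y / t) (Ici t) t :=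
    ((hasDerivAt_gaussianPDFReal_zero_one t).continuousAt.neg.div_const t).continuousWithinAt
  calc (gaussianReal 0 1).real (Ioi t) = ∫ x in Ioi t, gaussianPDFReal 0 1 x :=
        measureReal_gaussianReal_eq_integral _
    _ ≤ ∫ x in Ioi t, x / t * gaussianPDFReal 0 1 x :=
        setIntegral_mono_on (integrable_gaussianPDFReal 0 1).integrableOn hint measurableSet_Ioi
          fun x hx => le_mul_of_one_le_left (gaussianPDFReal_nonneg 0 1 x)
            ((one_le_div ht).2 (le_of_lt hx))
    _ = gaussianPDFReal 0 1 t / t := by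
        rw [integral_Ioi_of_hasDerivAt_of_tendsto hcont hderiv hint hlim]
        ring

lemma measureReal_gaussianReal_abs_gt_le {t : ℝ} (ht : 0 < t) :
    (gaussianReal 0 1).real {x | t < |x|} ≤ 2 * gaussianPDFReal 0 1 t / t := by
  have hsymm : (gaussianReal 0 1).real (Iio (-t)) = (gaussianReal 0 1).real (Ioi t) := by
    conv_lhs => rw [← neg_zero, ← gaussianReal_map_neg]
    rw [map_measureReal_apply measurable_neg measurableSet_Iio, neg_preimage, neg_Iio, neg_neg]
  have hsplit : {x : ℝ | t < |x|} = Ioi t ∪ Iio (-t) := by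
    ext x; simp [lt_abs, lt_neg]
  calc (gaussianReal 0 1).real {x | t < |x|}
      ≤ (gaussianReal 0 1).real (Ioi t) + (gaussianReal 0 1).real (Iio (-t)) := by
        rw [hsplit]; exact measureReal_union_le _ _
    _ ≤ 2 * gaussianPDFReal 0 1 t / t := by
        rw [hsymm, mul_div_assoc]; linarith [measureReal_gaussianReal_Ioi_le ht]

lemma gaussianPDFReal_two_le_measureReal_gaussianReal_Ioi_one :
    gaussianPDFReal 0 1 2 ≤ (gaussianReal 0 1).real (Ioi 1) := by
  have hanti : ∀ x ∈ Ioc (1 : ℝ) 2, gaussianPDFReal 0 1 2 ≤ gaussianPDFReal 0 1 x := by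
    rintro x ⟨h1, h2⟩
    simp only [gaussianPDFReal_zero_one]
    gcongr
  calc gaussianPDFReal 0 1 2 = ∫ _ in Ioc (1 : ℝ) 2, gaussianPDFReal 0 1 2 := by norm_num
    _ ≤ ∫ x in Ioc (1 : ℝ) 2, gaussianPDFReal 0 1 x :=
        setIntegral_mono_on (by simp) (integrable_gaussianPDFReal 0 1).integrableOn
          measurableSet_Ioc hanti
    _ ≤ ∫ x in Ioi (1 : ℝ), gaussianPDFReal 0 1 x :=
        setIntegral_mono_set (integrable_gaussianPDFReal 0 1).integrableOn
          (ae_of_all _ fun x => gaussianPDFReal_nonneg 0 1 x) Ioc_subset_Ioi_self.eventuallyLE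
    _ = (gaussianReal 0 1).real (Ioi 1) := (measureReal_gaussianReal_eq_integral _).symm

lemma map_pi_gaussianReal_dotProduct {ι : Type*} [Fintype ι] (c : ι → ℝ) :
    (Measure.pi fun _ : ι => gaussianReal 0 1).map (c ⬝ᵥ ·) =
      gaussianReal 0 (c ⬝ᵥ c).toNNReal := by
  let L : StrongDual ℝ (EuclideanSpace ℝ ι) := innerSL ℝ (WithLp.toLp 2 c)
  have hL : (c ⬝ᵥ ·) = L ∘ WithLp.toLp 2 := by
    ext x; simp [L, EuclideanSpace.inner_toLp_toLp, dotProduct_comm]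
  rw [hL, ← Measure.map_map L.continuous.measurable (by fun_prop), map_pi_eq_stdGaussian,
    IsGaussian.map_eq_gaussianReal, integral_strongDual_stdGaussian, variance_dual_stdGaussian,
    innerSL_apply_norm, ← real_inner_self_eq_norm_sq, EuclideanSpace.inner_toLp_toLp]
  simp

lemma map_pi_gaussianReal_dotProduct_div_sqrt {ι : Type*} [Fintype ι] {c : ι → ℝ} (hc : c ≠ 0) :
    (Measure.pi fun _ : ι => gaussianReal 0 1).map (fun x => c ⬝ᵥ x / √(c ⬝ᵥ c)) =
      gaussianReal 0 1 := by
  have hpos := dotProduct_self_pos hc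
  rw [show (fun x => c ⬝ᵥ x / √(c ⬝ᵥ c)) = (· / √(c ⬝ᵥ c)) ∘ (c ⬝ᵥ ·) from rfl,
    ← Measure.map_map (by fun_prop) (by fun_prop), map_pi_gaussianReal_dotProduct,
    gaussianReal_map_div_const]
  congr 1
  · simp
  · ext; simp [Real.sq_sqrt hpos.le, hpos.le, hpos.ne']

variable {Ω κ : Type*} [MeasurableSpace Ω] {P : Measure Ω} [Fintype κ] {ξ : Ω → κ → ℝ}

lemma measureReal_dotProduct_div_sqrt_mem (hξm : Measurable ξ)
    (hξ : P.map ξ = Measure.pi fun _ => gaussianReal 0 1) {c : κ → ℝ} (hc : c ≠ 0) {S : Set ℝ}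
    (hS : MeasurableSet S) :
    P.real {ω | c ⬝ᵥ ξ ω / √(c ⬝ᵥ c) ∈ S} = (gaussianReal 0 1).real S := by
  rw [← map_pi_gaussianReal_dotProduct_div_sqrt hc, ← hξ, Measure.map_map (by fun_prop) hξm,
    map_measureReal_apply (by fun_prop) hS]
  rfl

lemma measureReal_compl_forall_abs_dotProduct_le [IsFiniteMeasure P] {ι : Type*} [Fintype ι]
    (hξm : Measurable ξ) (hξ : P.map ξ = Measure.pi fun _ => gaussianReal 0 1)
    {c : ι → κ → ℝ} (hc : ∀ i, c i ≠ 0) {t : ℝ} (ht : 0 < t) :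
    P.real {ω | ∀ i, |c i ⬝ᵥ ξ ω| ≤ t * √(c i ⬝ᵥ c i)}ᶜ ≤
      Fintype.card ι * (2 * gaussianPDFReal 0 1 t / t) := by
  have hsub : {ω | ∀ i, |c i ⬝ᵥ ξ ω| ≤ t * √(c i ⬝ᵥ c i)}ᶜ ⊆
      ⋃ i, {ω | c i ⬝ᵥ ξ ω / √(c i ⬝ᵥ c i) ∈ {y | t < |y|}} := by
    intro ω hω
    obtain ⟨i, hi⟩ := not_forall.1 hω
    have hw := sqrt_pos.2 (dotProduct_self_pos (hc i))
    refine mem_iUnion.2 ⟨i, ?_⟩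
    rw [mem_ofPred_eq, mem_ofPred_eq, abs_div, abs_of_pos hw, lt_div_iff₀ hw]
    exact not_le.1 hi
  calc _ ≤ ∑ i, P.real {ω | c i ⬝ᵥ ξ ω / √(c i ⬝ᵥ c i) ∈ {y | t < |y|}} :=
        (measureReal_mono hsub).trans (measureReal_iUnion_fintype_le _)
    _ = Fintype.card ι * (gaussianReal 0 1).real {y | t < |y|} := by
        simp_rw [measureReal_dotProduct_div_sqrt_mem hξm hξ (hc _)
          (measurableSet_lt measurable_const measurable_abs)]
        simp
    _ ≤ _ := by gcongr; exact measureReal_gaussianReal_abs_gt_le ht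

lemma measureReal_sqrt_lt_dotProduct (hξm : Measurable ξ)
    (hξ : P.map ξ = Measure.pi fun _ => gaussianReal 0 1) {c : κ → ℝ} (hc : c ≠ 0) :
    P.real {ω | √(c ⬝ᵥ c) < c ⬝ᵥ ξ ω} = (gaussianReal 0 1).real (Ioi 1) := by
  rw [← measureReal_dotProduct_div_sqrt_mem hξm hξ hc measurableSet_Ioi]
  simp_rw [mem_Ioi, one_lt_div (sqrt_pos.2 (dotProduct_self_pos hc))]

end ProbabilityTheory

section Regret

variable {X ι : Type*}

lemma regret_le_of_unsaturated {θ θ' s : ι → ℝ} {g : ℝ} {i k j : ι} (hi : ∀ j, θ' j ≤ θ' i)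
    (hclose : ∀ j, |θ' j - θ j| ≤ g * s j) (hj : θ k - θ j ≤ g * s j) :
    θ k - θ i ≤ 2 * g * s j + g * s i := by
  linarith [(abs_le.1 (hclose i)).2, (abs_le.1 (hclose j)).1, hi j]

lemma regret_le_of_optimistic {θ θ' s : ι → ℝ} {g : ℝ} {i k : ι} (hi : ∀ j, θ' j ≤ θ' i)
    (hclose : ∀ j, |θ' j - θ j| ≤ g * s j) (hk : θ k < θ' k) :
    θ k - θ i ≤ g * s i := by
  linarith [(abs_le.1 (hclose i)).2, hi k]

variable [MeasurableSpace X] [Finite ι] [MeasurableSpace ι] [DiscreteMeasurableSpace ι]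

lemma integrable_comp_of_finite (ν : Measure X) [IsFiniteMeasure ν] {F : X → ι}
    (hF : Measurable F) (h : ι → ℝ) : Integrable (fun x => h (F x)) ν :=
  (Integrable.of_finite (μ := ν.map F)).comp_measurable hF

variable (ν : Measure X) [IsProbabilityMeasure ν] {θ s : ι → ℝ} {θ' : X → ι → ℝ} {F : X → ι}
  {g D : ℝ} {k : ι} {G : Set X}

lemma integral_regret_le_of_unsaturated (hF : Measurable F) (hFmax : ∀ x j, θ' x j ≤ θ' x (F x))
    (hg : 0 ≤ g) (hs : ∀ i, 0 ≤ s i) (hD : ∀ i, θ k - θ i ≤ D) (hG : MeasurableSet G)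
    (hclose : ∀ x ∈ G, ∀ i, |θ' x i - θ i| ≤ g * s i) {j : ι} (hj : θ k - θ j ≤ g * s j) :
    ∫ x, (θ k - θ (F x)) ∂ν ≤ 2 * g * s j + g * ∫ x, s (F x) ∂ν + D * ν.real Gᶜ := by
  have hpointwise : ∀ x, θ k - θ (F x) ≤ 2 * g * s j + g * s (F x) + D * Gᶜ.indicator 1 x := by
    intro x
    by_cases hx : x ∈ G
    · simpa [hx] using regret_le_of_unsaturated (hFmax x) (hclose x hx) hj
    · have : 0 ≤ 2 * g * s j + g * s (F x) := by have := hs j; have := hs (F x); positivity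
      simpa [hx] using (hD (F x)).trans (le_add_of_nonneg_left this)
  have hint₁ : Integrable (fun x => 2 * g * s j + g * s (F x)) ν :=
    (integrable_const _).add ((integrable_comp_of_finite ν hF s).const_mul g)
  have hint₂ : Integrable (fun x => D * Gᶜ.indicator 1 x) ν :=
    ((integrable_const 1).indicator hG.compl).const_mul D
  calc ∫ x, (θ k - θ (F x)) ∂ν
      ≤ ∫ x, (2 * g * s j + g * s (F x) + D * Gᶜ.indicator 1 x) ∂ν :=
        integral_mono (integrable_comp_of_finite ν hF fun i => θ k - θ i) (hint₁.add hint₂)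
          hpointwise
    _ = 2 * g * s j + g * ∫ x, s (F x) ∂ν + D * ν.real Gᶜ := by
        rw [integral_add hint₁ hint₂, integral_add (integrable_const _)
            ((integrable_comp_of_finite ν hF s).const_mul g),
          integral_const, integral_const_mul, integral_const_mul, integral_indicator_one hG.compl]
        simp

theorem integral_regret_le (hF : Measurable F) (hFmax : ∀ x j, θ' x j ≤ θ' x (F x))
    (hg : 0 ≤ g) (hs : ∀ i, 0 ≤ s i) (hD : ∀ i, θ k - θ i ≤ D) (hG : MeasurableSet G)
    (hclose : ∀ x ∈ G, ∀ i, |θ' x i - θ i| ≤ g * s i) (hO : MeasurableSet {x | θ k < θ' x k})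
    {δ q : ℝ} (hGc : ν.real Gᶜ ≤ δ) (hq : q ≤ ν.real {x | θ k < θ' x k}) (hδq : δ < q) :
    ∫ x, (θ k - θ (F x)) ∂ν ≤ g * (1 + 2 / (q - δ)) * ∫ x, s (F x) ∂ν + D * δ := by
  classical
  have := Fintype.ofFinite ι
  set O := {x | θ k < θ' x k}
  obtain ⟨j, hjU, hjmin⟩ := (Finset.univ.filter fun i => θ k - θ i ≤ g * s i).exists_min_image s
    ⟨k, by simpa using mul_nonneg hg (hs k)⟩
  have hGO : ∀ x ∈ G ∩ O, s j ≤ s (F x) := fun x hx => hjmin _ <| Finset.mem_filter.2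
    ⟨Finset.mem_univ _, regret_le_of_optimistic (hFmax x) (hclose x hx.1) hx.2⟩
  have hmeasGO : q - δ ≤ ν.real (G ∩ O) := by
    have : ν.real O ≤ ν.real (G ∩ O) + ν.real Gᶜ :=
      (measureReal_mono fun x hx => by by_cases h : x ∈ G <;> simp_all).trans
        (measureReal_union_le _ _)
    linarith
  have hlower : s j * (q - δ) ≤ ∫ x, s (F x) ∂ν := calc
    s j * (q - δ) ≤ s j * ν.real (G ∩ O) := mul_le_mul_of_nonneg_left hmeasGO (hs j)
    _ ≤ ∫ x in G ∩ O, s (F x) ∂ν := setIntegral_ge_of_const_le_real (hG.inter hO)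
          (measure_ne_top _ _) hGO (integrable_comp_of_finite ν hF s).integrableOn
    _ ≤ ∫ x, s (F x) ∂ν := setIntegral_le_integral (integrable_comp_of_finite ν hF s)
          (ae_of_all _ fun x => hs _)
  have hsj : 2 * g * s j ≤ g * (2 / (q - δ)) * ∫ x, s (F x) ∂ν := calc
    2 * g * s j ≤ 2 * g * ((∫ x, s (F x) ∂ν) / (q - δ)) := by
      gcongr; exact (le_div_iff₀ (sub_pos.2 hδq)).2 hlower
    _ = g * (2 / (q - δ)) * ∫ x, s (F x) ∂ν := by ring
  have hD0 : 0 ≤ D := (hD k).trans' (by simp)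
  have := integral_regret_le_of_unsaturated ν hF hFmax hg hs hD hG hclose
    (Finset.mem_filter.1 hjU).2
  linarith [mul_le_mul_of_nonneg_left hGc hD0]

end Regret

theorem integral_regret_le_of_gaussian_perturbation {Ω κ ι : Type*} [MeasurableSpace Ω]
    {P : Measure Ω} [IsProbabilityMeasure P] [Fintype κ] [Fintype ι] [MeasurableSpace ι]
    [DiscreteMeasurableSpace ι] {ξ : Ω → κ → ℝ} (hξm : Measurable ξ)
    (hξ : P.map ξ = Measure.pi fun _ => gaussianReal 0 1)
    {θ m : ι → ℝ} {c : ι → κ → ℝ} (hc : ∀ i, c i ≠ 0) {l v t : ℝ} (hl : 0 < l) (hlv : l ≤ v)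
    (ht : 0 < t) (hm : ∀ i, |m i - θ i| ≤ l * √(c i ⬝ᵥ c i)) {F : Ω → ι} (hF : Measurable F)
    (hFmax : ∀ ω j, m j + v * (c j ⬝ᵥ ξ ω) ≤ m (F ω) + v * (c (F ω) ⬝ᵥ ξ ω))
    {k : ι} {D δ q : ℝ} (hD : ∀ i, θ k - θ i ≤ D)
    (hδ : Fintype.card ι * (2 * gaussianPDFReal 0 1 t / t) ≤ δ)
    (hq : q ≤ (gaussianReal 0 1).real (Ioi 1)) (hδq : δ < q) :
    ∫ ω, (θ k - θ (F ω)) ∂P ≤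
      (v * t + l) * (1 + 2 / (q - δ)) * ∫ ω, √(c (F ω) ⬝ᵥ c (F ω)) ∂P + D * δ := by
  have hv : 0 < v := hl.trans_le hlv
  have hw i := sqrt_pos.2 (dotProduct_self_pos (hc i))
  have hdot : ∀ i, Measurable fun ω => c i ⬝ᵥ ξ ω := fun i => by fun_prop
  have hO : q ≤ P.real {ω | θ k < m k + v * (c k ⬝ᵥ ξ ω)} := by
    rw [← measureReal_sqrt_lt_dotProduct hξm hξ (hc k)] at hq
    refine hq.trans (measureReal_mono fun ω hω => ?_)
    have hω : √(c k ⬝ᵥ c k) < c k ⬝ᵥ ξ ω := hω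
    have : l * √(c k ⬝ᵥ c k) ≤ v * √(c k ⬝ᵥ c k) := by gcongr
    show θ k < m k + v * (c k ⬝ᵥ ξ ω)
    nlinarith [(abs_le.1 (hm k)).1]
  refine integral_regret_le P (θ' := fun ω i => m i + v * (c i ⬝ᵥ ξ ω))
    (G := {ω | ∀ i, |c i ⬝ᵥ ξ ω| ≤ t * √(c i ⬝ᵥ c i)}) hF hFmax (by positivity)
    (fun i => (hw i).le) hD ?_ ?_ ?_
    ((measureReal_compl_forall_abs_dotProduct_le hξm hξ hc ht).trans hδ) hO hδq
  · simp only [ofPred_forall]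
    exact .iInter fun i => measurableSet_le (hdot i).abs measurable_const
  · intro ω hω i
    have := abs_le.1 (hm i)
    have := abs_le.1 (hω i)
    rw [abs_le]; constructor <;> nlinarith
  · exact measurableSet_lt measurable_const (measurable_const.add ((hdot k).const_mul v))

lemma sqrt_pi_mem_Icc : 1.77 ≤ √π ∧ √π ≤ 1.78 := by
  constructor
  · rw [le_sqrt (by norm_num) pi_pos.le]; linarith [pi_gt_d2]
  · rw [sqrt_le_left (by norm_num)]; linarith [pi_lt_d2]

lemma one_div_four_exp_one_sqrt_pi_mem_Icc :
    1 / 20 ≤ 1 / (4 * rexp 1 * √π) ∧ 1 / (4 * rexp 1 * √π) ≤ 1 / 19 := by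
  obtain ⟨h1, h2⟩ := sqrt_pi_mem_Icc
  have := exp_one_lt_d9
  have := exp_one_gt_d9
  have : 0 < 4 * rexp 1 * √π := by positivity
  constructor
  · rw [div_le_div_iff₀ (by norm_num) this]; nlinarith
  · rw [div_le_div_iff₀ this (by norm_num)]; nlinarith

lemma one_div_four_exp_one_sqrt_pi_le_gaussianPDFReal_two :
    1 / (4 * rexp 1 * √π) ≤ gaussianPDFReal 0 1 2 := by
  have hexp : rexp (-2 ^ 2 / 2) = (rexp 1 * rexp 1)⁻¹ := by
    rw [← exp_add, ← exp_neg]; norm_num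
  have h2 : √2 ≤ 1.415 := by rw [sqrt_le_left (by norm_num)]; norm_num
  have := exp_one_lt_d9
  simp only [gaussianPDFReal_zero_one]
  rw [hexp, sqrt_mul zero_le_two, ← mul_inv, one_div]
  refine inv_anti₀ (by positivity) ?_
  have h : √2 * rexp 1 ≤ 4 := by nlinarith [sqrt_nonneg 2]
  nlinarith [mul_le_mul_of_nonneg_right h (mul_pos (exp_pos 1) (sqrt_pos.2 pi_pos)).le]

lemma three_halves_le_log {x : ℝ} (hx : 5 ≤ x) : 3 / 2 ≤ log x := by
  rw [le_log_iff_exp_le (by linarith)]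
  have : rexp (3 / 2) * rexp (3 / 2) = rexp 1 * rexp 1 * rexp 1 := by
    simp only [← exp_add]; norm_num
  nlinarith [exp_pos 1, exp_pos (3 / 2), exp_one_lt_d9]

lemma gaussianPDFReal_sqrt_four_log {x : ℝ} (hx : 1 ≤ x) :
    gaussianPDFReal 0 1 √(4 * log x) = (√(2 * π))⁻¹ / x ^ 2 := by
  have := log_nonneg hx
  simp only [gaussianPDFReal_zero_one]
  rw [sq_sqrt (by positivity),
    show -(4 * log x) / 2 = -log (x ^ 2) by rw [log_pow]; push_cast; ring, exp_neg,
    exp_log (by positivity), div_eq_mul_inv]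

lemma six_le_sqrt_four_log_mul_sqrt_two_pi {x : ℝ} (hx : 5 ≤ x) :
    6 ≤ √(4 * log x) * √(2 * π) := by
  have := three_halves_le_log hx
  rw [← sqrt_mul (by linarith), le_sqrt (by norm_num) (by positivity)]
  nlinarith [pi_gt_three]

lemma natCast_mul_two_mul_gaussianPDFReal_div_le {T N : ℕ} (hT : 5 ≤ T) (hN : 1 ≤ N) :
    N * (2 * gaussianPDFReal 0 1 √(4 * log (T * N)) / √(4 * log (T * N))) ≤ 1 / (3 * T ^ 2) := by
  have hN : (1 : ℝ) ≤ N := by exact_mod_cast hN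
  have hT : (5 : ℝ) ≤ T := by exact_mod_cast hT
  have h6 := six_le_sqrt_four_log_mul_sqrt_two_pi (x := T * N) (by nlinarith)
  have ht : 0 < √(4 * log (T * N)) := pos_of_mul_pos_left (by linarith) (sqrt_nonneg (2 * π))
  rw [gaussianPDFReal_sqrt_four_log (by nlinarith)]
  calc _ = 2 / (√(4 * log (T * N)) * √(2 * π)) / ((T : ℝ) ^ 2 * N) := by field_simp
    _ ≤ 2 / 6 / ((T : ℝ) ^ 2 * 1) := by gcongr
    _ = 1 / (3 * (T : ℝ) ^ 2) := by ring

lemma one_div_three_mul_sq_le {T : ℕ} (hT : 5 ≤ T) : 1 / (3 * (T : ℝ) ^ 2) ≤ 1 / 75 := by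
  have hT : (5 : ℝ) ≤ T := by exact_mod_cast hT
  rw [div_le_div_iff₀ (by positivity) (by norm_num)]; nlinarith

lemma one_div_three_mul_sq_lt_one_div_four_exp_one_sqrt_pi {T : ℕ} (hT : 5 ≤ T) :
    1 / (3 * (T : ℝ) ^ 2) < 1 / (4 * rexp 1 * √π) := by
  linarith [one_div_three_mul_sq_le hT, one_div_four_exp_one_sqrt_pi_mem_Icc.1]

lemma mul_one_add_two_div_sub_mul_add_le {T : ℕ} (hT : 5 ≤ T) {g W : ℝ} (hg : 0 ≤ g) (hW : 0 ≤ W) :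
    g * (1 + 2 / (1 / (4 * rexp 1 * √π) - 1 / (3 * T ^ 2))) * W + 2 * (1 / (3 * T ^ 2)) ≤
      11 * g / (1 / (4 * rexp 1 * √π)) * W + 1 / T ^ 2 := by
  obtain ⟨h20, h19⟩ := one_div_four_exp_one_sqrt_pi_mem_Icc
  have hδ := one_div_three_mul_sq_le hT
  set p := 1 / (4 * rexp 1 * √π)
  have : 2 / (p - 1 / (3 * T ^ 2)) ≤ 2 / (1 / 20 - 1 / 75) := by gcongr
  have : 11 / (1 / 19) ≤ 11 / p := by gcongr
  have : 1 + 2 / (p - 1 / (3 * T ^ 2)) ≤ 11 / p := by linarith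
  have : 2 * (1 / (3 * (T : ℝ) ^ 2)) ≤ 1 / T ^ 2 := by
    rw [show 1 / (3 * (T : ℝ) ^ 2) = 1 / 3 * (1 / T ^ 2) by ring]
    linarith [show 0 ≤ 1 / (T : ℝ) ^ 2 by positivity]
  calc _ ≤ g * (11 / p) * W + 1 / T ^ 2 := by gcongr
    _ = _ := by ring

theorem expected_regret_bound_general
    {Ω : Type*} [MeasurableSpace Ω] (P : Measure Ω) [IsProbabilityMeasure P]
    (N T : ℕ) (hT : 5 ≤ T) (hN : 1 ≤ N)
    (B : Matrix (Fin N) (Fin N) ℝ) (hB : B.PosDef)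
    (μ μhat : Fin N → ℝ) (b : Fin N → (Fin N → ℝ))
    (hbne : ∀ i, b i ≠ 0) (hμb : ∀ i, |b i ⬝ᵥ μ| ≤ 1)
    (l v : ℝ) (hl : 0 < l) (hlv : l ≤ v)
    (astar : Fin N)
    (g p : ℝ) (hg : g = v * Real.sqrt (4 * Real.log (T * N)) + l)
    (hp : p = 1 / (4 * Real.exp 1 * Real.sqrt Real.pi))
    (hE : ∀ i : Fin N, |b i ⬝ᵥ μhat - b i ⬝ᵥ μ| ≤ l * Real.sqrt (b i ⬝ᵥ B⁻¹.mulVec (b i)))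
    (ξ : Ω → (Fin N → ℝ)) (hξm : Measurable ξ)
    (hξ : P.map ξ = Measure.pi (fun _ : Fin N => gaussianReal 0 1))
    (μtil : Ω → (Fin N → ℝ))
    (hμtil : ∀ ω, μtil ω = μhat + v • (hB.posSemidef.sqrt)⁻¹.mulVec (ξ ω))
    (a : (Fin N → ℝ) → Fin N) (ham : Measurable a)
    (ha : ∀ (x : Fin N → ℝ) (j : Fin N), b j ⬝ᵥ x ≤ b (a x) ⬝ᵥ x) :
    (∫ ω, (b astar ⬝ᵥ μ - b (a (μtil ω)) ⬝ᵥ μ) ∂P) ≤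
      (11 * g / p) *
        (∫ ω, Real.sqrt (b (a (μtil ω)) ⬝ᵥ B⁻¹.mulVec (b (a (μtil ω)))) ∂P) +
        1 / T ^ 2 := by
  subst hg hp
  set M := hB.posSemidef.sqrt⁻¹
  have hquad : ∀ x, x ⬝ᵥ B⁻¹ *ᵥ x = M *ᵥ x ⬝ᵥ M *ᵥ x := hB.posSemidef.dotProduct_inv_mulVec_self
  have hsample : ∀ ω i, b i ⬝ᵥ μtil ω = b i ⬝ᵥ μhat + v * (M *ᵥ b i ⬝ᵥ ξ ω) := fun ω i => by
    rw [hμtil, dotProduct_add, dotProduct_smul, hB.posSemidef.dotProduct_inv_sqrt_mulVec,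
      smul_eq_mul]
  have hc : ∀ i, M *ᵥ b i ≠ 0 := fun i h => by
    simpa [hquad, h] using hB.inv.dotProduct_mulVec_pos (hbne i)
  have hμtilm : Measurable μtil := by rw [funext hμtil]; fun_prop
  have ht : 0 < √(4 * log (T * N)) :=
    sqrt_pos.2 (mul_pos four_pos (log_pos (by norm_cast; nlinarith)))
  simp only [hquad]
  refine (integral_regret_le_of_gaussian_perturbation (θ := fun i => b i ⬝ᵥ μ)
    (m := fun i => b i ⬝ᵥ μhat) (F := fun ω => a (μtil ω)) (k := astar) (D := 2)
    hξm hξ hc hl hlv ht (by simpa [hquad] using hE) (ham.comp hμtilm)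
    (fun ω j => by simpa only [hsample] using ha (μtil ω) j)
    (fun i => by linarith [abs_le.1 (hμb astar), abs_le.1 (hμb i)])
    (by simpa using natCast_mul_two_mul_gaussianPDFReal_div_le hT hN)
    (one_div_four_exp_one_sqrt_pi_le_gaussianPDFReal_two.trans
      gaussianPDFReal_two_le_measureReal_gaussianReal_Ioi_one)
    (one_div_three_mul_sq_lt_one_div_four_exp_one_sqrt_pi hT)).trans
    (mul_one_add_two_div_sub_mul_add_le hT (add_nonneg (mul_nonneg (hl.le.trans hlv) ht.le) hl.le)
      (integral_nonneg fun _ => sqrt_nonneg _))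

/-- Lemma 9: if the event `E^μ̂` holds, then the expected instantaneous regret of the arm
chosen by Thompson sampling (`μ̃ ∼ N(μ̂, v²B⁻¹)`, `a(μ̃)` a maximizer of `i ↦ b_iᵀμ̃`)
satisfies `E[Δ_{a(μ̃)}] ≤ (11g/p) E[‖b_{a(μ̃)}‖_{B⁻¹}] + 1/T²`, where
`g = v√(4 ln(TN)) + l` and `p = 1/(4e√π)`. -/
theorem expected_regret_bound
    {Ω : Type*} [MeasurableSpace Ω] (P : Measure Ω) [IsProbabilityMeasure P]
    (N T : ℕ) (hT : 5 ≤ T) (hN : 1 ≤ N)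
    (B : Matrix (Fin N) (Fin N) ℝ) (hB : B.PosDef)
    (μ μhat : Fin N → ℝ) (b : Fin N → (Fin N → ℝ))
    (hbne : ∀ i, b i ≠ 0) (hμb : ∀ i, |b i ⬝ᵥ μ| ≤ 1)
    (l v : ℝ) (hl : 0 < l) (hlv : l ≤ v)
    (astar : Fin N) (hastar : ∀ j, b j ⬝ᵥ μ ≤ b astar ⬝ᵥ μ)
    (g p : ℝ) (hg : g = v * Real.sqrt (4 * Real.log (T * N)) + l)
    (hp : p = 1 / (4 * Real.exp 1 * Real.sqrt Real.pi))
    (hE : ∀ i : Fin N, |b i ⬝ᵥ μhat - b i ⬝ᵥ μ| ≤ l * Real.sqrt (b i ⬝ᵥ B⁻¹.mulVec (b i)))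
    (ξ : Ω → (Fin N → ℝ)) (hξm : Measurable ξ)
    (hξ : P.map ξ = Measure.pi (fun _ : Fin N => gaussianReal 0 1))
    (μtil : Ω → (Fin N → ℝ))
    (hμtil : ∀ ω, μtil ω = μhat + v • (hB.posSemidef.sqrt)⁻¹.mulVec (ξ ω))
    (a : (Fin N → ℝ) → Fin N) (ham : Measurable a)
    (ha : ∀ (x : Fin N → ℝ) (j : Fin N), b j ⬝ᵥ x ≤ b (a x) ⬝ᵥ x) :
    (∫ ω, (b astar ⬝ᵥ μ - b (a (μtil ω)) ⬝ᵥ μ) ∂P) ≤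
      (11 * g / p) *
        (∫ ω, Real.sqrt (b (a (μtil ω)) ⬝ᵥ B⁻¹.mulVec (b (a (μtil ω)))) ∂P) +
        1 / T ^ 2 :=
  expected_regret_bound_general P N T hT hN B hB μ μhat b hbne hμb l v hl hlv astar g p hg hp hE ξ
    hξm hξ μtil hμtil a ham ha
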